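/- Let (X,d) be a metric space, let S ⊆ X be a finite server set, and let c_1,…,c_m ∈ X be clients with m ≤ |S|. Let 1 ≤ t < m, let f : {1,…,t} → S be an optimal matching of the first t clients into S with image S₁ = range(f), and let g : {1,…,m} → S be an optimal matching of all m clients into S whose image S₂ = range(g) satisfies S₁ ⊆ S₂ (so |S₂ \ S₁| = m − t). Then there exists an injective map h : {t+1,…,m} → S₂ \ S₁ with Σ_{j=t+1}^{m} d(c_j, h(j)) ≤ cost(f) + cost(g); in particular, the minimum cost of a matching of the clients c_{t+1},…,c_m onto the servers S₂ \ S₁ is at most 2·cost(g). -/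

import Mathlib

/-!
Index the servers of `S₂` by `g`, so that `f = g ∘ e` for an injective `e : [1,t] → [1,m]`.
Each client `j > t` follows the chain `j, e⁻¹ j, e⁻¹ (e⁻¹ j), …` until it reaches a server
outside `S₁`; a step from `g (e i)` to `g i` costs at most `d(cᵢ, f i) + d(cᵢ, g i)`, and distinct
chains use distinct `i`, so the rerouting costs at most `cost f + cost g`. Rather than following
chains, the rerouting is built by induction on the domain of `e`: once `a` is added, the client
previously sent to `g (e a)` takes over the server of `a`. Finally `cost f ≤ cost g` because `g`
restricted to the first `t` clients is a matching and `f` is optimal.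
-/

/-- A matching of the first `t` clients (indexed `1,…,t`) into the server set `S`:
an injective assignment whose values on `{1,…,t}` are servers in `S`. -/
def IsMatching {X : Type*} [MetricSpace X] (S : Finset X) (t : ℕ) (f : ℕ → X) : Prop :=
  Set.InjOn f (Set.Icc 1 t) ∧ ∀ j ∈ Set.Icc 1 t, f j ∈ S

/-- The cost of a matching `f` of the first `t` clients `c 1, …, c t`. -/
noncomputable def matchingCost {X : Type*} [MetricSpace X] (t : ℕ) (c f : ℕ → X) : ℝ :=
  ∑ j ∈ Finset.Icc 1 t, dist (c j) (f j)

/-- `OPT S t c` is the minimum cost of a matching of the first `t` clients into `S`. -/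
noncomputable def OPT {X : Type*} [MetricSpace X] (S : Finset X) (t : ℕ) (c : ℕ → X) : ℝ :=
  sInf {r : ℝ | ∃ f : ℕ → X, IsMatching S t f ∧ matchingCost t c f = r}

open Finset

theorem sum_dist_comp_swap_erase_le {ι X : Type*} [DecidableEq ι] [PseudoMetricSpace X]
    (φ : ι → X) (r : ι → ι) {s : Finset ι} {a j₀ : ι} (ha : a ∈ s) (hj₀ : j₀ ∈ s) :
    ∑ j ∈ s.erase a, dist (φ j) (φ (r (Equiv.swap a j₀ j))) ≤
      dist (φ (r j₀)) (φ a) + ∑ j ∈ s, dist (φ j) (φ (r j)) := by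
  rw [← add_sum_erase s _ ha]
  obtain rfl | hne := eq_or_ne j₀ a
  · simp only [Equiv.swap_self, Equiv.refl_apply]
    linarith [dist_nonneg (x := φ (r j₀)) (y := φ j₀), dist_nonneg (x := φ j₀) (y := φ (r j₀))]
  have hj₀' : j₀ ∈ s.erase a := mem_erase.2 ⟨hne, hj₀⟩
  rw [← add_sum_erase _ _ hj₀', ← add_sum_erase _ _ hj₀', Equiv.swap_apply_right]
  have hrest : ∑ j ∈ (s.erase a).erase j₀, dist (φ j) (φ (r (Equiv.swap a j₀ j))) =
      ∑ j ∈ (s.erase a).erase j₀, dist (φ j) (φ (r j)) := by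
    refine sum_congr rfl fun j hj => ?_
    obtain ⟨hj₀, hja, -⟩ : j ≠ j₀ ∧ j ≠ a ∧ j ∈ s := by simpa using hj
    rw [Equiv.swap_apply_of_ne_of_ne hja hj₀]
  have htri := dist_triangle4 (φ j₀) (φ (r j₀)) (φ a) (φ (r a))
  linarith

theorem exists_bijOn_sdiff_sum_dist_le {ι X : Type*} [DecidableEq ι] [PseudoMetricSpace X]
    (φ : ι → X) (e : ι → ι) {A B : Finset ι} (hAB : A ⊆ B) (he : Set.InjOn e A)
    (heB : Set.MapsTo e A B) :
    ∃ r : ι → ι, Set.BijOn r ↑(B \ A) ↑(B \ A.image e) ∧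
      ∑ j ∈ B \ A, dist (φ j) (φ (r j)) ≤ ∑ i ∈ A, dist (φ (e i)) (φ i) := by
  induction A using Finset.induction_on with
  | empty => exact ⟨id, by simpa using Set.bijOn_id _, by simp⟩
  | insert a A haA ih =>
    rw [insert_subset_iff] at hAB
    rw [coe_insert, Set.injOn_insert (mod_cast haA)] at he
    have hea : e a ∈ B \ A.image e := mem_sdiff.2 ⟨heB (by simp), by simpa using he.2⟩
    obtain ⟨r, hr, hsum⟩ := ih hAB.2 he.1 (heB.mono_left (by simp))
    obtain ⟨j₀, hj₀, hrj₀⟩ := hr.surjOn hea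
    have ha : a ∈ B \ A := mem_sdiff.2 ⟨hAB.1, haA⟩
    refine ⟨r ∘ Equiv.swap a j₀, ?_, ?_⟩
    · have hswap := (Equiv.bijOn_swap ha hj₀).sdiff_singleton (mem_coe.2 ha)
      rw [Equiv.swap_apply_left] at hswap
      rw [sdiff_insert, image_insert, sdiff_insert, coe_erase, coe_erase, ← hrj₀]
      exact (hr.sdiff_singleton hj₀).comp hswap
    · have hcost := sum_dist_comp_swap_erase_le φ r ha hj₀
      rw [hrj₀] at hcost
      rw [sdiff_insert, sum_insert haA]
      exact hcost.trans (by linarith)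

theorem IsMatching.mono {X : Type*} [MetricSpace X] {S : Finset X} {s t : ℕ} {f : ℕ → X}
    (hf : IsMatching S t f) (hst : s ≤ t) : IsMatching S s f :=
  have hsub : Set.Icc 1 s ⊆ Set.Icc 1 t := Set.Icc_subset_Icc_right hst
  ⟨hf.1.mono hsub, fun j hj => hf.2 j (hsub hj)⟩

theorem matchingCost_nonneg {X : Type*} [MetricSpace X] (t : ℕ) (c f : ℕ → X) :
    0 ≤ matchingCost t c f :=
  sum_nonneg fun _ _ => dist_nonneg

theorem matchingCost_mono {X : Type*} [MetricSpace X] (c f : ℕ → X) {s t : ℕ} (hst : s ≤ t) :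
    matchingCost s c f ≤ matchingCost t c f :=
  sum_le_sum_of_subset_of_nonneg (Icc_subset_Icc_right hst) fun _ _ _ => dist_nonneg

theorem OPT_le_matchingCost {X : Type*} [MetricSpace X] {S : Finset X} {t : ℕ} (c : ℕ → X)
    {f : ℕ → X} (hf : IsMatching S t f) : OPT S t c ≤ matchingCost t c f :=
  csInf_le ⟨0, by rintro r ⟨f, -, rfl⟩; exact matchingCost_nonneg t c f⟩ ⟨f, hf, rfl⟩

theorem exists_injOn_sum_dist_le_matchingCost_add {X : Type*} [MetricSpace X] (c f g : ℕ → X)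
    {t m : ℕ} (htm : t ≤ m) (hf : Set.InjOn f (Set.Icc 1 t)) (hg : Set.InjOn g (Set.Icc 1 m))
    (hsub : f '' Set.Icc 1 t ⊆ g '' Set.Icc 1 m) :
    ∃ h : ℕ → X, Set.InjOn h (Set.Icc (t + 1) m) ∧
      (∀ j ∈ Set.Icc (t + 1) m, h j ∈ g '' Set.Icc 1 m \ f '' Set.Icc 1 t) ∧
      ∑ j ∈ Icc (t + 1) m, dist (c j) (h j) ≤ matchingCost t c f + matchingCost m c g := by
  set e := Function.invFunOn g (Set.Icc 1 m) ∘ f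
  have hge : ∀ i ∈ Set.Icc 1 t, e i ∈ Set.Icc 1 m ∧ g (e i) = f i := fun i hi =>
    ⟨Function.invFunOn_mem (hsub ⟨i, hi, rfl⟩), Function.invFunOn_eq (hsub ⟨i, hi, rfl⟩)⟩
  have he : Set.InjOn e (Set.Icc 1 t) := fun i hi i' hi' hii' =>
    hf hi hi' (by rw [← (hge i hi).2, ← (hge i' hi').2, hii'])
  have hAB : Icc 1 t ⊆ Icc 1 m := Icc_subset_Icc_right htm
  obtain ⟨r, hr, hsum⟩ := exists_bijOn_sdiff_sum_dist_le g e hAB (by simpa using he)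
    (fun i hi => by simpa using (hge i (by simpa using hi)).1)
  have hIcc : Icc (t + 1) m = Icc 1 m \ Icc 1 t := by ext; simp; omega
  rw [← hIcc, coe_Icc] at hr
  have hrB : ∀ j ∈ Set.Icc (t + 1) m, r j ∈ Icc 1 m \ (Icc 1 t).image e := fun j hj =>
    hr.mapsTo hj
  refine ⟨g ∘ r, ?_, fun j hj => ?_, ?_⟩
  · exact hg.comp hr.injOn fun j hj => by simpa using (mem_sdiff.1 (hrB j hj)).1
  · obtain ⟨hrj, hre⟩ := mem_sdiff.1 (hrB j hj)
    refine ⟨⟨r j, by simpa using hrj, rfl⟩, ?_⟩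
    rintro ⟨i, hi, hfi⟩
    have hei : e i = r j := hg (hge i hi).1 (by simpa using hrj) ((hge i hi).2.trans hfi)
    exact hre (mem_image.2 ⟨i, by simpa using hi, hei⟩)
  · calc ∑ j ∈ Icc (t + 1) m, dist (c j) (g (r j))
        ≤ ∑ j ∈ Icc 1 m \ Icc 1 t, (dist (c j) (g j) + dist (g j) (g (r j))) :=
          hIcc ▸ sum_le_sum fun j _ => dist_triangle _ _ _
      _ ≤ ∑ j ∈ Icc 1 m \ Icc 1 t, dist (c j) (g j) + ∑ i ∈ Icc 1 t, dist (g (e i)) (g i) := by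
          rw [sum_add_distrib]; gcongr
      _ ≤ ∑ j ∈ Icc 1 m \ Icc 1 t, dist (c j) (g j) +
            ∑ i ∈ Icc 1 t, (dist (c i) (f i) + dist (c i) (g i)) := by
          gcongr with i hi
          rw [(hge i (by simpa using hi)).2]
          exact dist_triangle_left _ _ _
      _ = matchingCost t c f + matchingCost m c g := by
          rw [sum_add_distrib, matchingCost, matchingCost, ← sum_sdiff hAB]; ring

theorem stmt6_general {X : Type*} [MetricSpace X] (S : Finset X) (c : ℕ → X) (m t : ℕ)
    (htm : t < m)
    (f : ℕ → X) (hf : IsMatching S t f) (hfopt : matchingCost t c f = OPT S t c)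
    (g : ℕ → X) (hg : IsMatching S m g)
    (hsub : f '' Set.Icc 1 t ⊆ g '' Set.Icc 1 m) :
    (∃ h : ℕ → X, Set.InjOn h (Set.Icc (t + 1) m) ∧
        (∀ j ∈ Set.Icc (t + 1) m, h j ∈ g '' Set.Icc 1 m \ f '' Set.Icc 1 t) ∧
        ∑ j ∈ Finset.Icc (t + 1) m, dist (c j) (h j) ≤
          matchingCost t c f + matchingCost m c g) ∧
      sInf {r : ℝ | ∃ h : ℕ → X, Set.InjOn h (Set.Icc (t + 1) m) ∧
          (∀ j ∈ Set.Icc (t + 1) m, h j ∈ g '' Set.Icc 1 m \ f '' Set.Icc 1 t) ∧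
          r = ∑ j ∈ Finset.Icc (t + 1) m, dist (c j) (h j)} ≤
        2 * matchingCost m c g := by
  obtain ⟨h, hinj, hmem, hcost⟩ :=
    exists_injOn_sum_dist_le_matchingCost_add c f g htm.le hf.1 hg.1 hsub
  have hfg : matchingCost t c f ≤ matchingCost m c g := calc
    matchingCost t c f = OPT S t c := hfopt
    _ ≤ matchingCost t c g := OPT_le_matchingCost c (hg.mono htm.le)
    _ ≤ matchingCost m c g := matchingCost_mono c g htm.le
  refine ⟨⟨h, hinj, hmem, hcost⟩, le_trans (csInf_le ⟨0, ?_⟩ ⟨h, hinj, hmem, rfl⟩) (by linarith)⟩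
  rintro r ⟨-, -, -, rfl⟩
  exact sum_nonneg fun _ _ => dist_nonneg

/-- Let `f` be an optimal matching of the first `t` clients with image `S₁ = f '' [1,t]`, and
let `g` be an optimal matching of the first `m` clients (with `t < m ≤ |S|`) whose image
`S₂ = g '' [1,m]` contains `S₁`.  Then the clients `c (t+1), …, c m` can be injectively
matched into `S₂ \ S₁` with total cost at most `cost f + cost g`; in particular, the minimum
cost of a matching of the clients `c (t+1), …, c m` onto the servers `S₂ \ S₁` is at most
`2 · cost g`. -/
theorem stmt6 {X : Type*} [MetricSpace X] (S : Finset X) (c : ℕ → X) (m t : ℕ)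
    (hm : m ≤ S.card) (ht1 : 1 ≤ t) (htm : t < m)
    (f : ℕ → X) (hf : IsMatching S t f) (hfopt : matchingCost t c f = OPT S t c)
    (g : ℕ → X) (hg : IsMatching S m g) (hgopt : matchingCost m c g = OPT S m c)
    (hsub : f '' Set.Icc 1 t ⊆ g '' Set.Icc 1 m) :
    (∃ h : ℕ → X, Set.InjOn h (Set.Icc (t + 1) m) ∧
        (∀ j ∈ Set.Icc (t + 1) m, h j ∈ g '' Set.Icc 1 m \ f '' Set.Icc 1 t) ∧
        ∑ j ∈ Finset.Icc (t + 1) m, dist (c j) (h j) ≤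
          matchingCost t c f + matchingCost m c g) ∧
      sInf {r : ℝ | ∃ h : ℕ → X, Set.InjOn h (Set.Icc (t + 1) m) ∧
          (∀ j ∈ Set.Icc (t + 1) m, h j ∈ g '' Set.Icc 1 m \ f '' Set.Icc 1 t) ∧
          r = ∑ j ∈ Finset.Icc (t + 1) m, dist (c j) (h j)} ≤
        2 * matchingCost m c g :=
  stmt6_general S c m t htm f hf hfopt g hg hsub
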